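/- arXiv:2504.20644 — 2 statements merged into one kernel-verified Lean document; each statement's English description precedes it below -/
import Mathlib

section
/- Let f: 2^Ω → ℝ be a non-negative monotone γ-weakly submodular function with f(∅) = 0, on a finite ground set Ω, and let k ≥ 1. Let G_k be the set selected by the greedy algorithm that starts from ∅ and at each of k steps adds an element maximizing the marginal gain. Then f(G_k) ≥ (1 - e^{-γ}) · max_{|S| ≤ k} f(S). -/
/-!
Fix `S` with `|S| ≤ k` and a greedy set `G`. Weak submodularity bounds `γ (f (S ∪ G) - f G)` by the
sum of the marginal gains at `G` of the elements of `S`; there are at most `k` of them and each is at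
most the greedy gain. So every greedy step shrinks the gap `f S - f G_t` by a factor `1 - γ / k`,
and `(1 - γ / k) ^ k ≤ e^{-γ}`.
-/

open Finset

section WeaklySubmodular

variable {α : Type*} [DecidableEq α] {f : Finset α → ℝ} {γ : ℝ}

def IsWeaklySubmodular (γ : ℝ) (f : Finset α → ℝ) : Prop :=
  ∀ A B : Finset α, ∀ x : α, A ⊆ B → x ∉ B →
    f (insert x A) - f A ≥ γ * (f (insert x B) - f B)

theorem IsWeaklySubmodular.mul_sub_le_sum_marginal (hf : IsWeaklySubmodular γ f)
    (T A : Finset α) : γ * (f (T ∪ A) - f A) ≤ ∑ x ∈ T, (f (insert x A) - f A) := by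
  induction T using Finset.induction_on with
  | empty => simp
  | @insert x T hxT ih =>
    rw [sum_insert hxT, insert_union]
    by_cases hxA : x ∈ A
    · rw [insert_eq_of_mem (mem_union_right T hxA), insert_eq_of_mem hxA]
      linarith
    · have hx : x ∉ T ∪ A := by simp [hxT, hxA]
      linarith [hf A (T ∪ A) x subset_union_right hx]

theorem IsWeaklySubmodular.mul_sub_le_card_mul_greedy_gain (hf : IsWeaklySubmodular γ f)
    (hγ : 0 ≤ γ) (hmono : Monotone f) {G S : Finset α} {x : α}
    (hbest : ∀ y ∉ G, f (insert y G) ≤ f (insert x G)) {k : ℕ} (hS : #S ≤ k) :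
    γ * (f S - f G) ≤ k * (f (insert x G) - f G) := by
  have hgain_nonneg : 0 ≤ f (insert x G) - f G := sub_nonneg.2 (hmono (subset_insert x G))
  have hgain : ∀ y ∈ S, f (insert y G) - f G ≤ f (insert x G) - f G := by
    intro y _
    by_cases hyG : y ∈ G
    · rwa [insert_eq_of_mem hyG, sub_self]
    · linarith [hbest y hyG]
  calc γ * (f S - f G) ≤ γ * (f (S ∪ G) - f G) := by
        gcongr
        exact hmono subset_union_left
    _ ≤ ∑ y ∈ S, (f (insert y G) - f G) := hf.mul_sub_le_sum_marginal S G
    _ ≤ #S * (f (insert x G) - f G) := by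
        rw [← nsmul_eq_mul, ← sum_const]
        exact sum_le_sum hgain
    _ ≤ k * (f (insert x G) - f G) := by gcongr

end WeaklySubmodular

theorem stmt_7_general (Ω : Type*) [DecidableEq Ω] (f : Finset Ω → ℝ) (γ : ℝ)
    (hγ0 : 0 < γ) (hγ1 : γ ≤ 1)
    (hnonneg : ∀ A : Finset Ω, 0 ≤ f A)
    (hmono : ∀ A B : Finset Ω, A ⊆ B → f A ≤ f B)
    (hempty : f ∅ = 0)
    (hweak : ∀ A B : Finset Ω, ∀ x : Ω, A ⊆ B → x ∉ B →
      f (insert x A) - f A ≥ γ * (f (insert x B) - f B))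
    (k : ℕ) (hk : 1 ≤ k)
    (G : ℕ → Finset Ω) (hG0 : G 0 = ∅)
    (hgreedy : ∀ t < k, ∃ x ∉ G t, G (t + 1) = insert x (G t) ∧
      ∀ y ∉ G t, f (insert y (G t)) ≤ f (insert x (G t))) :
    ∀ S : Finset Ω, S.card ≤ k → (1 - Real.exp (-γ)) * f S ≤ f (G k) := by
  intro S hS
  have hk0 : (0 : ℝ) < k := by exact_mod_cast hk
  have hγk : γ ≤ k := hγ1.trans (by exact_mod_cast hk)
  have hcontract : ∀ t < k, f S - f (G (t + 1)) ≤ (1 - γ / k) * (f S - f (G t)) := by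
    intro t ht
    obtain ⟨x, -, hGx, hbest⟩ := hgreedy t ht
    have hstep := IsWeaklySubmodular.mul_sub_le_card_mul_greedy_gain hweak hγ0.le
      (fun A B h => hmono A B h) hbest hS
    rw [← hGx] at hstep
    have hgain : γ / k * (f S - f (G t)) ≤ f (G (t + 1)) - f (G t) := by
      rw [div_mul_eq_mul_div, div_le_iff₀ hk0]
      linarith
    linarith
  have hgap := le_geom (u := fun t => f S - f (G t))
    (sub_nonneg.2 ((div_le_one hk0).2 hγk)) k hcontract
  simp only [hG0, hempty, sub_zero] at hgap
  have hexp := mul_le_mul_of_nonneg_right (Real.one_sub_div_pow_le_exp_neg hγk) (hnonneg S)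
  linarith

theorem stmt_7 (Ω : Type*) [Fintype Ω] [DecidableEq Ω] (f : Finset Ω → ℝ) (γ : ℝ)
    (hγ0 : 0 < γ) (hγ1 : γ ≤ 1)
    (hnonneg : ∀ A : Finset Ω, 0 ≤ f A)
    (hmono : ∀ A B : Finset Ω, A ⊆ B → f A ≤ f B)
    (hempty : f ∅ = 0)
    (hweak : ∀ A B : Finset Ω, ∀ x : Ω, A ⊆ B → x ∉ B →
      f (insert x A) - f A ≥ γ * (f (insert x B) - f B))
    (k : ℕ) (hk : 1 ≤ k)
    (G : ℕ → Finset Ω) (hG0 : G 0 = ∅)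
    (hgreedy : ∀ t < k, ∃ x ∉ G t, G (t + 1) = insert x (G t) ∧
      ∀ y ∉ G t, f (insert y (G t)) ≤ f (insert x (G t))) :
    ∀ S : Finset Ω, S.card ≤ k → (1 - Real.exp (-γ)) * f S ≤ f (G k) :=
  stmt_7_general Ω f γ hγ0 hγ1 hnonneg hmono hempty hweak k hk G hG0 hgreedy
end

section
/- Let f: 2^Ω → ℝ be a non-negative monotone submodular function with f(∅)=0 on a finite ground set Ω, and let G_k be the greedy solution after k steps. Then f(G_k) ≥ (1 - (1 - 1/k)^k) · max_{|S| ≤ k} f(S) ≥ (1 - 1/e) · max_{|S| ≤ k} f(S). -/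
/-!
By submodularity, `f S - f A` is at most the sum over `x ∈ S` of the marginal gains at `A`, and
each of these is at most the greedy gain. Hence, when `#S ≤ k`, a greedy step closes at least a
`1/k` fraction of the gap `f S - f (G t)`, so after `k` steps the gap is at most
`(1 - 1/k)^k f S ≤ e⁻¹ f S`.
-/

open Finset

/-- Submodularity in its diminishing-returns form. -/
def HasDiminishingReturns {α : Type*} [DecidableEq α] (f : Finset α → ℝ) : Prop :=
  ∀ A B : Finset α, ∀ x : α, A ⊆ B → x ∉ B → f (insert x B) - f B ≤ f (insert x A) - f A

section Greedy

variable {α : Type*} [DecidableEq α] {f : Finset α → ℝ}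

theorem HasDiminishingReturns.le_add_sum_sub (hmono : Monotone f)
    (hsub : HasDiminishingReturns f) (A T : Finset α) :
    f (A ∪ T) ≤ f A + ∑ x ∈ T, (f (insert x A) - f A) := by
  induction T using Finset.induction_on with
  | empty => simp
  | @insert a T haT ih =>
    rw [union_insert, sum_insert haT]
    by_cases ha : a ∈ A ∪ T
    · have hgain : 0 ≤ f (insert a A) - f A := sub_nonneg.mpr (hmono (subset_insert a A))
      rw [insert_eq_of_mem ha]
      linarith
    · linarith [hsub A (A ∪ T) a subset_union_left ha]

theorem HasDiminishingReturns.sub_le_card_mul_greedy_gain (hmono : Monotone f)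
    (hsub : HasDiminishingReturns f) {A : Finset α} {x : α}
    (hmax : ∀ y ∉ A, f (insert y A) ≤ f (insert x A)) (S : Finset α) :
    f S - f A ≤ #S * (f (insert x A) - f A) := by
  have hgain : ∀ y ∈ S, f (insert y A) - f A ≤ f (insert x A) - f A := by
    intro y _
    by_cases hy : y ∈ A
    · rw [insert_eq_of_mem hy, sub_self]
      exact sub_nonneg.mpr (hmono (subset_insert x A))
    · linarith [hmax y hy]
  calc f S - f A ≤ f (A ∪ S) - f A := by gcongr; exact hmono subset_union_right
    _ ≤ ∑ y ∈ S, (f (insert y A) - f A) := by linarith [hsub.le_add_sum_sub hmono A S]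
    _ ≤ ∑ _y ∈ S, (f (insert x A) - f A) := sum_le_sum hgain
    _ = #S * (f (insert x A) - f A) := by rw [sum_const, nsmul_eq_mul]

theorem HasDiminishingReturns.sub_greedy_step_le (hmono : Monotone f)
    (hsub : HasDiminishingReturns f) {k : ℕ} (hk : 0 < k) {S A : Finset α} (hS : #S ≤ k)
    {x : α} (hmax : ∀ y ∉ A, f (insert y A) ≤ f (insert x A)) :
    f S - f (insert x A) ≤ (1 - 1 / k) * (f S - f A) := by
  have hk' : (0 : ℝ) < k := by exact_mod_cast hk
  have hgain : 0 ≤ f (insert x A) - f A := sub_nonneg.mpr (hmono (subset_insert x A))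
  have hgap : (f S - f A) / k ≤ f (insert x A) - f A := by
    rw [div_le_iff₀ hk', mul_comm]
    calc f S - f A ≤ #S * (f (insert x A) - f A) :=
          hsub.sub_le_card_mul_greedy_gain hmono hmax S
      _ ≤ k * (f (insert x A) - f A) := by gcongr
  calc f S - f (insert x A) ≤ (f S - f A) - (f S - f A) / k := by linarith
    _ = (1 - 1 / k) * (f S - f A) := by ring

theorem HasDiminishingReturns.sub_greedy_le_pow (hmono : Monotone f)
    (hsub : HasDiminishingReturns f) (hempty : f ∅ = 0) {k : ℕ} (hk : 0 < k)
    {G : ℕ → Finset α} (hG0 : G 0 = ∅)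
    (hgreedy : ∀ t < k, ∃ x ∉ G t, G (t + 1) = insert x (G t) ∧
      ∀ y ∉ G t, f (insert y (G t)) ≤ f (insert x (G t)))
    {S : Finset α} (hS : #S ≤ k) :
    ∀ t ≤ k, f S - f (G t) ≤ (1 - 1 / k) ^ t * f S := by
  have hbase : (0 : ℝ) ≤ 1 - 1 / k := by
    rw [sub_nonneg, div_le_one (by exact_mod_cast hk)]
    exact_mod_cast hk
  intro t ht
  induction t with
  | zero => simp [hG0, hempty]
  | succ t ih =>
    obtain ⟨x, -, hGt, hmax⟩ := hgreedy t ht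
    calc f S - f (G (t + 1)) ≤ (1 - 1 / k) * (f S - f (G t)) := by
          rw [hGt]; exact hsub.sub_greedy_step_le hmono hk hS hmax
      _ ≤ (1 - 1 / k) * ((1 - 1 / k) ^ t * f S) := by gcongr; exact ih (by omega)
      _ = (1 - 1 / k) ^ (t + 1) * f S := by ring

end Greedy

theorem stmt_8_general (Ω : Type*) [DecidableEq Ω] (f : Finset Ω → ℝ)
    (hmono : ∀ A B : Finset Ω, A ⊆ B → f A ≤ f B)
    (hempty : f ∅ = 0)
    (hsub : ∀ A B : Finset Ω, ∀ x : Ω, A ⊆ B → x ∉ B →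
      f (insert x A) - f A ≥ f (insert x B) - f B)
    (k : ℕ) (hk : 1 ≤ k)
    (G : ℕ → Finset Ω) (hG0 : G 0 = ∅)
    (hgreedy : ∀ t < k, ∃ x ∉ G t, G (t + 1) = insert x (G t) ∧
      ∀ y ∉ G t, f (insert y (G t)) ≤ f (insert x (G t))) :
    ∀ S : Finset Ω, S.card ≤ k →
      (1 - (1 - 1 / (k : ℝ)) ^ k) * f S ≤ f (G k) ∧
      (1 - 1 / Real.exp 1) * f S ≤ (1 - (1 - 1 / (k : ℝ)) ^ k) * f S := by
  intro S hS
  have hmono' : Monotone f := fun A B hAB => hmono A B hAB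
  have hsub' : HasDiminishingReturns f := hsub
  have hgap := hsub'.sub_greedy_le_pow hmono' hempty hk hG0 hgreedy hS k le_rfl
  have hS0 : 0 ≤ f S := hempty ▸ hmono' (empty_subset S)
  have hexp : (1 - 1 / (k : ℝ)) ^ k ≤ 1 / Real.exp 1 := by
    rw [one_div (Real.exp 1), ← Real.exp_neg]
    exact Real.one_sub_div_pow_le_exp_neg (by exact_mod_cast hk)
  constructor
  · linarith
  · gcongr

theorem stmt_8 (Ω : Type*) [Fintype Ω] [DecidableEq Ω] (f : Finset Ω → ℝ)
    (hnonneg : ∀ A : Finset Ω, 0 ≤ f A)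
    (hmono : ∀ A B : Finset Ω, A ⊆ B → f A ≤ f B)
    (hempty : f ∅ = 0)
    (hsub : ∀ A B : Finset Ω, ∀ x : Ω, A ⊆ B → x ∉ B →
      f (insert x A) - f A ≥ f (insert x B) - f B)
    (k : ℕ) (hk : 1 ≤ k)
    (G : ℕ → Finset Ω) (hG0 : G 0 = ∅)
    (hgreedy : ∀ t < k, ∃ x ∉ G t, G (t + 1) = insert x (G t) ∧
      ∀ y ∉ G t, f (insert y (G t)) ≤ f (insert x (G t))) :
    ∀ S : Finset Ω, S.card ≤ k →
      (1 - (1 - 1 / (k : ℝ)) ^ k) * f S ≤ f (G k) ∧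
      (1 - 1 / Real.exp 1) * f S ≤ (1 - (1 - 1 / (k : ℝ)) ^ k) * f S :=
  stmt_8_general Ω f hmono hempty hsub k hk G hG0 hgreedy
end
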